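/- Let X be a path-connected space and w ∈ H²(X; ℤ/2). The operations Q¹ := Sq¹ and Q² := Sq² + w·(−) on H*(X; ℤ/2) satisfy the Adem-type relations Q¹Q¹ = 0 and Q²Q² = Q¹ Q² Q¹ in degrees where these compositions are defined, provided Sq¹ w = 0 and w² = Sq² w. -/

import Mathlib

/-! Since `Sq¹ w = 0`, the Cartan formulas say that multiplication by `w` commutes with `Sq¹`
and that `Sq²(w y) = w² y + w Sq² y`. Expanding `Q²Q² x`, the twisting terms then come in
pairs `2 (w Sq² x + w² x)`, which vanish in characteristic two, leaving `Sq²Sq² x`; on the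
other side `Q¹Q²Q¹ x = Sq¹Sq²Sq¹ x + w Sq¹Sq¹ x = Sq¹Sq²Sq¹ x`. -/

theorem two_eq_zero_of_add_self_eq_zero {A : Type*} [AddMonoidWithOne A]
    (hchar : ∀ x : A, x + x = 0) : (2 : A) = 0 := by
  rw [← one_add_one_eq_two]
  exact hchar 1

theorem sq1_mul_of_sq1_eq_zero {A : Type*} [CommRing A] (Sq1 : A → A)
    (hCartan1 : ∀ x y : A, Sq1 (x * y) = Sq1 x * y + x * Sq1 y)
    {w : A} (hw1 : Sq1 w = 0) (x : A) : Sq1 (w * x) = w * Sq1 x := by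
  rw [hCartan1, hw1, zero_mul, zero_add]

theorem sq2_mul_of_sq2_eq_sq {A : Type*} [CommRing A] (Sq1 Sq2 : A → A)
    (hCartan2 : ∀ x y : A, Sq2 (x * y) = Sq2 x * y + Sq1 x * Sq1 y + x * Sq2 y)
    {w : A} (hw1 : Sq1 w = 0) (hw2 : Sq2 w = w ^ 2) (x : A) :
    Sq2 (w * x) = w ^ 2 * x + w * Sq2 x := by
  rw [hCartan2, hw1, hw2, zero_mul, add_zero]

/-- Let `A` be the mod-2 cohomology ring `H*(X; ℤ/2)` of a (path-connected) space,
a commutative ring in which `x + x = 0`, equipped with Steenrod squares `Sq¹, Sq²`: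
additive operations satisfying `Sq¹Sq¹ = 0`, the Adem relation
`Sq²Sq² = Sq¹Sq²Sq¹` (equivalently `Sq²Sq² = Sq³Sq¹` with `Sq³ = Sq¹Sq²`), and
the Cartan formulas.  Given `w ∈ H²(X; ℤ/2)` with `Sq¹ w = 0` and `Sq² w = w²`,
the twisted operations `Q¹ := Sq¹` and `Q² := Sq² + w·(−)` satisfy the Adem-type
relations `Q¹Q¹ = 0` and `Q²Q² = Q¹Q²Q¹`. -/
theorem twisted_steenrod_adem_relations
    (A : Type) [CommRing A]
    (hchar : ∀ x : A, x + x = 0)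
    (Sq1 Sq2 : A → A)
    (hSq1_add : ∀ x y : A, Sq1 (x + y) = Sq1 x + Sq1 y)
    (hSq2_add : ∀ x y : A, Sq2 (x + y) = Sq2 x + Sq2 y)
    (hSq1Sq1 : ∀ x : A, Sq1 (Sq1 x) = 0)
    (hAdem : ∀ x : A, Sq2 (Sq2 x) = Sq1 (Sq2 (Sq1 x)))
    (hCartan1 : ∀ x y : A, Sq1 (x * y) = Sq1 x * y + x * Sq1 y)
    (hCartan2 : ∀ x y : A, Sq2 (x * y) = Sq2 x * y + Sq1 x * Sq1 y + x * Sq2 y)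
    (w : A) (hw1 : Sq1 w = 0) (hw2 : Sq2 w = w ^ 2) :
    (∀ x : A, Sq1 (Sq1 x) = 0) ∧
    (∀ x : A, (fun y => Sq2 y + w * y) ((fun y => Sq2 y + w * y) x) =
      Sq1 ((fun y => Sq2 y + w * y) (Sq1 x))) := by
  refine ⟨hSq1Sq1, fun x => ?_⟩
  have h2 : (2 : A) = 0 := two_eq_zero_of_add_self_eq_zero hchar
  calc Sq2 (Sq2 x + w * x) + w * (Sq2 x + w * x)
      = Sq2 (Sq2 x) + 2 * (w * Sq2 x + w ^ 2 * x) := by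
        rw [hSq2_add, sq2_mul_of_sq2_eq_sq Sq1 Sq2 hCartan2 hw1 hw2]
        ring
    _ = Sq1 (Sq2 (Sq1 x) + w * Sq1 x) := by
        rw [h2, zero_mul, add_zero, hAdem, hSq1_add, sq1_mul_of_sq1_eq_zero Sq1 hCartan1 hw1,
          hSq1Sq1, mul_zero, add_zero]
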